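/- Consider biased majority dynamics on a G(n,p) random graph with an arbitrary initial partition V = C₁ ∪ C₂, and set Δ = | |C_{1,0}| − |C_{2,0}| |/2. Let D > 0 and 𝒟 > 0 be arbitrary constants and suppose (log n)/n ≤ p ≤ 1/4 and Δ ≤ 10/p. Then there is a constant Ĉ_{D,𝒟} > 0 such that for all sufficiently large n, if Δ ≥ (1/√p)·exp(Ĉ_{D,𝒟}·√(log(1/p))), then P( | |C_{1,1}| − E[|C_{1,1}|] | ≥ D·√(pn)·Δ ) ≤ 1/√(np(1−p)) + 𝒟·p·Δ. -/

import Mathlib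

open MeasureTheory ProbabilityTheory Finset

noncomputable section

namespace MD

/-- Bernoulli measure on `Bool` with parameter `p` (`true` with probability `p`). -/
def bern (p : ℝ) : Measure Bool :=
  (ENNReal.ofReal p) • Measure.dirac true + (ENNReal.ofReal (1 - p)) • Measure.dirac false

instance bern_finite (p : ℝ) : IsFiniteMeasure (bern p) := by
  constructor
  simp only [bern, Measure.coe_add, Pi.add_apply, Measure.smul_apply, smul_eq_mul,
    measure_univ, mul_one]
  exact ENNReal.add_lt_top.mpr ⟨ENNReal.ofReal_lt_top, ENNReal.ofReal_lt_top⟩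

/-- The Erdős–Rényi `G(n,p)` measure on graphs over the vertex set `Fin n`: each
unordered pair of vertices is independently an edge with probability `p`. -/
def gnp (n : ℕ) (p : ℝ) : Measure (Sym2 (Fin n) → Bool) :=
  Measure.pi fun _ => bern p

variable {n : ℕ}

/-- Adjacency in the sampled graph. -/
def Adj (ω : Sym2 (Fin n) → Bool) (u v : Fin n) : Prop :=
  u ≠ v ∧ ω s(u, v) = true

instance (ω : Sym2 (Fin n) → Bool) (u v : Fin n) : Decidable (Adj ω u v) :=
  inferInstanceAs (Decidable (u ≠ v ∧ ω s(u, v) = true))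

/-- The neighbourhood of `v` in the sampled graph. -/
def nbhd (ω : Sym2 (Fin n) → Bool) (v : Fin n) : Finset (Fin n) :=
  univ.filter fun u => Adj ω v u

/-- Majority dynamics: the colour of each vertex on each day (`true` = colour 1),
started from the initial colouring `init`.  On day `t+1` a vertex adopts the colour
held by the majority of its neighbours on day `t`, keeping its colour on a tie. -/
def colour (init : Fin n → Bool) (ω : Sym2 (Fin n) → Bool) : ℕ → Fin n → Bool
  | 0, v => init v
  | t + 1, v =>
      let a := ((nbhd ω v).filter fun u => colour init ω t u = true).card
      let b := ((nbhd ω v).filter fun u => colour init ω t u = false).card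
      if b < a then true
      else if a < b then false
      else colour init ω t v

/-- `C_{1,t}`: the vertices of colour 1 on day `t`, given the initial colour-1 class `C1`
(the initial colour-2 class being its complement). -/
def C1t (C1 : Finset (Fin n)) (ω : Sym2 (Fin n) → Bool) (t : ℕ) : Finset (Fin n) :=
  univ.filter fun v => colour (fun x => decide (x ∈ C1)) ω t v = true

/-- `C_{2,t}`: the vertices of colour 2 on day `t`. -/
def C2t (C1 : Finset (Fin n)) (ω : Sym2 (Fin n) → Bool) (t : ℕ) : Finset (Fin n) :=
  univ.filter fun v => colour (fun x => decide (x ∈ C1)) ω t v = false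

/-- Biased majority dynamics: on day `t+1` a vertex `v` gets colour 1 (`true`) iff
`|Γ(v) ∩ C_{1,t}| - |Γ(v) ∩ C_{2,t}| + (1/2)·1[v ∈ C_{1,t}] - (1/2)·1[v ∈ C_{2,t}] ≥ -1`. -/
def bcolour (C1 : Finset (Fin n)) (ω : Sym2 (Fin n) → Bool) : ℕ → Fin n → Bool
  | 0, v => decide (v ∈ C1)
  | t + 1, v =>
      let a : ℤ := ((nbhd ω v).filter fun u => bcolour C1 ω t u = true).card
      let b : ℤ := ((nbhd ω v).filter fun u => bcolour C1 ω t u = false).card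
      decide (-2 ≤ 2 * a - 2 * b + (if bcolour C1 ω t v = true then 1 else -1))

/-- `|C_{1,t}|` for biased majority dynamics. -/
def bC1card (C1 : Finset (Fin n)) (ω : Sym2 (Fin n) → Bool) (t : ℕ) : ℕ :=
  (univ.filter fun v => bcolour C1 ω t v = true).card

/-!
Whether a vertex has colour 1 on day 1 depends only on the edges at that vertex, and every
potential edge is incident to at most two vertices. For such a read-two family of functions of
independent coordinates, Finner's inequality (proved by integrating out one coordinate at a time
and applying Cauchy–Schwarz to the at most two factors that read it) bounds the moment generating
function of the sum by the product of the square roots of the individual moment generating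
functions at twice the parameter. With Hoeffding's lemma for the indicators this makes
`|C_{1,1}| - E|C_{1,1}|` sub-Gaussian with variance proxy `n/2`, so a deviation of `D √(pn) Δ`
has probability at most `2 exp(-D² p Δ²)`; the lower bound on `Δ` makes this at most `𝒟 p Δ`.
-/

section ProductWeight

variable {ι β : Type*} {w : β → ℝ}

def prodWeight [Fintype ι] (w : β → ℝ) (ω : ι → β) : ℝ := ∏ i, w (ω i)

lemma prodWeight_nonneg [Fintype ι] (hw0 : ∀ b, 0 ≤ w b) (ω : ι → β) : 0 ≤ prodWeight w ω :=
  prod_nonneg fun i _ => hw0 (ω i)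

lemma prodWeight_mul_eq_mul_prodWeight_update [Fintype ι] [DecidableEq ι] (ω : ι → β) (i : ι)
    (b : β) :
    prodWeight w ω * w b = w (ω i) * prodWeight w (Function.update ω i b) := by
  have hrest : ∏ j ∈ univ.erase i, w (Function.update ω i b j) = ∏ j ∈ univ.erase i, w (ω j) :=
    prod_congr rfl fun j hj => by rw [Function.update_of_ne (ne_of_mem_erase hj)]
  simp only [prodWeight, ← mul_prod_erase univ _ (mem_univ i), hrest, Function.update_self]
  ring

variable [DecidableEq ι] [Fintype β]

def rmsAt (w : β → ℝ) (i : ι) (f : (ι → β) → ℝ) (ω : ι → β) : ℝ :=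
  √(∑ b, w b * f (Function.update ω i b) ^ 2)

lemma dependsOn_rmsAt {f : (ι → β) → ℝ} {A : Finset ι} (hf : DependsOn f (A : Set ι)) (i : ι) :
    DependsOn (rmsAt w i f) ((A.erase i : Finset ι) : Set ι) := by
  intro ω ω' hωω'
  refine congrArg Real.sqrt (sum_congr rfl fun b _ => ?_)
  congr 2
  refine hf fun j hj => ?_
  rcases eq_or_ne j i with rfl | hji
  · simp
  · simpa [hji] using hωω' j (by simpa [hji] using hj)

variable [Fintype ι]

def expect (w : β → ℝ) (f : (ι → β) → ℝ) : ℝ := ∑ ω, prodWeight w ω * f ω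

lemma sum_prodWeight (hw1 : ∑ b, w b = 1) : ∑ ω : ι → β, prodWeight w ω = 1 := by
  simp [prodWeight, ← Fintype.prod_sum, hw1]

lemma expect_const (hw1 : ∑ b, w b = 1) (c : ℝ) : expect (ι := ι) w (fun _ => c) = c := by
  rw [expect, ← sum_mul, sum_prodWeight hw1, one_mul]

lemma expect_mono (hw0 : ∀ b, 0 ≤ w b) {f g : (ι → β) → ℝ} (hfg : ∀ ω, f ω ≤ g ω) :
    expect w f ≤ expect w g :=
  sum_le_sum fun ω _ => mul_le_mul_of_nonneg_left (hfg ω) (prodWeight_nonneg hw0 ω)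

lemma expect_sum_update (hw1 : ∑ b, w b = 1) (i : ι) (F : (ι → β) → ℝ) :
    expect w (fun ω => ∑ b, w b * F (Function.update ω i b)) = expect w F := by
  -- `(ω, b) ↦ (update ω i b, ω i)` is an involution of `(ι → β) × β`
  let e : Equiv.Perm ((ι → β) × β) := Function.Involutive.toPerm
    (fun x => (Function.update x.1 i x.2, x.1 i)) fun x => by simp
  calc expect w (fun ω => ∑ b, w b * F (Function.update ω i b))
      = ∑ x : (ι → β) × β, (fun y => w y.2 * (prodWeight w y.1 * F y.1)) (e x) := by
        simp only [expect, Fintype.sum_prod_type, mul_sum]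
        refine sum_congr rfl fun ω _ => sum_congr rfl fun b _ => ?_
        show _ = w (ω i) * (prodWeight w (Function.update ω i b) * F (Function.update ω i b))
        rw [← mul_assoc, ← mul_assoc, prodWeight_mul_eq_mul_prodWeight_update]
    _ = ∑ x : (ι → β) × β, w x.2 * (prodWeight w x.1 * F x.1) :=
        Equiv.sum_comp (e : (ι → β) × β ≃ (ι → β) × β) fun y => w y.2 * (prodWeight w y.1 * F y.1)
    _ = expect w F := by
        simp only [Fintype.sum_prod_type_right, ← mul_sum, ← sum_mul, hw1, one_mul, expect]

lemma sum_mul_mul_le_sqrt_mul_sqrt (hw0 : ∀ b, 0 ≤ w b) (x y : β → ℝ) :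
    ∑ b, w b * (x b * y b) ≤ √(∑ b, w b * x b ^ 2) * √(∑ b, w b * y b ^ 2) := by
  have h := Real.sum_mul_le_sqrt_mul_sqrt univ (fun b => √(w b) * x b) (fun b => √(w b) * y b)
  simp only [mul_pow, Real.sq_sqrt (hw0 _)] at h
  convert h using 2 with b
  rw [mul_mul_mul_comm, Real.mul_self_sqrt (hw0 b)]

lemma sum_mul_prod_le_prod_sqrt_of_card_le_two {α : Type*} (hw0 : ∀ b, 0 ≤ w b)
    (hw1 : ∑ b, w b = 1) {T : Finset α} (hT : #T ≤ 2) (h : α → β → ℝ) :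
    ∑ b, w b * ∏ v ∈ T, h v b ≤ ∏ v ∈ T, √(∑ b, w b * h v b ^ 2) := by
  obtain hT0 | hT1 | hT2 : #T = 0 ∨ #T = 1 ∨ #T = 2 := by omega
  · simp [card_eq_zero.1 hT0, hw1]
  · obtain ⟨a, rfl⟩ := card_eq_one.1 hT1
    simpa [hw1] using sum_mul_mul_le_sqrt_mul_sqrt hw0 (h a) 1
  · classical
    obtain ⟨a, c, hac, rfl⟩ := card_eq_two.1 hT2
    simpa [prod_pair hac] using sum_mul_mul_le_sqrt_mul_sqrt hw0 (h a) (h c)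

lemma expect_rmsAt_sq (hw0 : ∀ b, 0 ≤ w b) (hw1 : ∑ b, w b = 1) (i : ι) (f : (ι → β) → ℝ) :
    expect w (fun ω => rmsAt w i f ω ^ 2) = expect w (fun ω => f ω ^ 2) := by
  simp only [rmsAt]
  simp_rw [Real.sq_sqrt (sum_nonneg fun b _ => mul_nonneg (hw0 b) (sq_nonneg _))]
  exact expect_sum_update hw1 i fun ω => f ω ^ 2

lemma expect_prod_le_expect_prod_rmsAt {α : Type*} (hw0 : ∀ b, 0 ≤ w b) (hw1 : ∑ b, w b = 1)
    (V : Finset α) (g : α → (ι → β) → ℝ) (A : α → Finset ι) (hg0 : ∀ v ω, 0 ≤ g v ω)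
    (hdep : ∀ v, DependsOn (g v) (A v : Set ι)) (i : ι) (hread : #{v ∈ V | i ∈ A v} ≤ 2) :
    expect w (fun ω => ∏ v ∈ V, g v ω) ≤
      expect w (fun ω => ∏ v ∈ V, if i ∈ A v then rmsAt w i (g v) ω else g v ω) := by
  rw [← expect_sum_update hw1 i]
  refine expect_mono hw0 fun ω => ?_
  have hfixed : ∀ v ∈ V.filter (fun v => i ∉ A v), ∀ b, g v (Function.update ω i b) = g v ω :=
    fun v hv b => hdep v fun j hj =>
      Function.update_of_ne (ne_of_mem_of_not_mem (mem_coe.1 hj) (mem_filter.1 hv).2) _ _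
  calc ∑ b, w b * ∏ v ∈ V, g v (Function.update ω i b)
      = (∏ v ∈ V with i ∉ A v, g v ω) *
          ∑ b, w b * ∏ v ∈ V with i ∈ A v, g v (Function.update ω i b) := by
        rw [mul_sum]
        refine sum_congr rfl fun b _ => ?_
        rw [← prod_filter_mul_prod_filter_not V (fun v => i ∈ A v),
          prod_congr rfl fun v hv => hfixed v hv b]
        ring
    _ ≤ (∏ v ∈ V with i ∉ A v, g v ω) * ∏ v ∈ V with i ∈ A v, rmsAt w i (g v) ω :=
        mul_le_mul_of_nonneg_left
          (sum_mul_prod_le_prod_sqrt_of_card_le_two hw0 hw1 hread _)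
          (prod_nonneg fun v _ => hg0 v ω)
    _ = ∏ v ∈ V, if i ∈ A v then rmsAt w i (g v) ω else g v ω := by
        rw [prod_ite, mul_comm]

/-- **Finner's inequality**, read-two case. -/
theorem expect_prod_le_prod_sqrt_expect_sq {α : Type*} (hw0 : ∀ b, 0 ≤ w b)
    (hw1 : ∑ b, w b = 1) (V : Finset α) (g : α → (ι → β) → ℝ) (A : α → Finset ι)
    (hg0 : ∀ v ω, 0 ≤ g v ω) (hdep : ∀ v, DependsOn (g v) (A v : Set ι))
    (hread : ∀ i, #{v ∈ V | i ∈ A v} ≤ 2) :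
    expect w (fun ω => ∏ v ∈ V, g v ω) ≤ ∏ v ∈ V, √(expect w fun ω => g v ω ^ 2) := by
  suffices key : ∀ s : Finset ι, ∀ (g : α → (ι → β) → ℝ) (A : α → Finset ι),
      (∀ v ω, 0 ≤ g v ω) → (∀ v, DependsOn (g v) (A v : Set ι)) →
      (∀ i, #{v ∈ V | i ∈ A v} ≤ 2) → (∀ v, A v ⊆ s) →
      expect w (fun ω => ∏ v ∈ V, g v ω) ≤ ∏ v ∈ V, √(expect w fun ω => g v ω ^ 2) from
    key univ g A hg0 hdep hread fun v => subset_univ _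
  intro s
  induction s using Finset.induction_on with
  | empty =>
    intro g A hg0 hdep _ hA
    obtain ⟨b₀⟩ : Nonempty β := by
      by_contra hβ
      simp [not_nonempty_iff.1 hβ] at hw1
    have hconst : ∀ v ω, g v ω = g v fun _ => b₀ := fun v ω =>
      (hdep v).mono (by simpa using hA v) |>.empty _ _
    simp only [hconst, expect_const hw1, Real.sqrt_sq (hg0 _ _), le_refl]
  | insert i s _ ih =>
    intro g A hg0 hdep hread hA
    let g' v ω := if i ∈ A v then rmsAt w i (g v) ω else g v ω
    have hg'0 : ∀ v ω, 0 ≤ g' v ω := fun v ω => by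
      by_cases h : i ∈ A v <;> simp [g', h, rmsAt, hg0]
    have hdep' : ∀ v, DependsOn (g' v) ((A v).erase i : Set ι) := fun v => by
      by_cases h : i ∈ A v
      · simpa [g', h] using dependsOn_rmsAt (hdep v) i
      · simpa [g', h, erase_eq_of_notMem h] using hdep v
    have hsq : ∀ v, expect w (fun ω => g' v ω ^ 2) = expect w (fun ω => g v ω ^ 2) := fun v => by
      by_cases h : i ∈ A v
      · simpa [g', h] using expect_rmsAt_sq hw0 hw1 i (g v)
      · simp [g', h]
    calc expect w (fun ω => ∏ v ∈ V, g v ω)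
        ≤ expect w (fun ω => ∏ v ∈ V, g' v ω) :=
          expect_prod_le_expect_prod_rmsAt hw0 hw1 V g A hg0 hdep i (hread i)
      _ ≤ ∏ v ∈ V, √(expect w fun ω => g' v ω ^ 2) :=
          ih g' (fun v => (A v).erase i) hg'0 hdep'
            (fun j => (card_le_card (monotone_filter_right V fun v _ => mem_of_mem_erase)).trans
              (hread j))
            fun v j hj =>
              (mem_insert.1 (hA v (mem_of_mem_erase hj))).resolve_left (ne_of_mem_erase hj)
      _ = ∏ v ∈ V, √(expect w fun ω => g v ω ^ 2) := by simp only [hsq]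

end ProductWeight

section ReadTwo

open scoped NNReal

variable {ι β α : Type*} [Fintype ι] [DecidableEq ι] [Fintype β] [MeasurableSpace β]
  [MeasurableSingletonClass β] {μ : Measure β} [IsProbabilityMeasure μ]

lemma integral_pi_eq_expect (f : (ι → β) → ℝ) :
    ∫ ω, f ω ∂(Measure.pi fun _ : ι => μ) = expect (fun b => μ.real {b}) f := by
  rw [integral_fintype Integrable.of_finite]
  refine sum_congr rfl fun ω _ => ?_
  simp [measureReal_def, prodWeight, ENNReal.toReal_prod]

/-- The factor `2` comes from Finner's inequality, which evaluates each moment generating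
function at twice the parameter. -/
theorem hasSubgaussianMGF_sum_of_read_two (V : Finset α) (X : α → (ι → β) → ℝ)
    (A : α → Finset ι) (hdep : ∀ v, DependsOn (X v) (A v : Set ι))
    (hread : ∀ i, #{v ∈ V | i ∈ A v} ≤ 2) {c : α → ℝ≥0}
    (hX : ∀ v, HasSubgaussianMGF (X v) (c v) (Measure.pi fun _ : ι => μ)) :
    HasSubgaussianMGF (fun ω => ∑ v ∈ V, X v ω) (2 * ∑ v ∈ V, c v)
      (Measure.pi fun _ : ι => μ) where
  integrable_exp_mul _ := Integrable.of_finite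
  mgf_le t := by
    have hw0 : ∀ b, 0 ≤ μ.real {b} := fun _ => measureReal_nonneg
    have hw1 : ∑ b, μ.real {b} = 1 := by simp
    have hsq : ∀ v, (expect (fun b => μ.real {b}) fun ω => Real.exp (t * X v ω) ^ 2) =
        mgf (X v) (Measure.pi fun _ : ι => μ) (2 * t) := fun v => by
      simp only [mgf, integral_pi_eq_expect, ← Real.exp_nat_mul]
      ring_nf
    calc mgf (fun ω => ∑ v ∈ V, X v ω) (Measure.pi fun _ : ι => μ) t
        = expect (fun b => μ.real {b}) fun ω => ∏ v ∈ V, Real.exp (t * X v ω) := by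
          simp only [mgf, integral_pi_eq_expect, mul_sum, Real.exp_sum]
      _ ≤ ∏ v ∈ V, √(mgf (X v) (Measure.pi fun _ : ι => μ) (2 * t)) := by
          simp only [← hsq]
          exact expect_prod_le_prod_sqrt_expect_sq hw0 hw1 V _ A (fun _ _ => (Real.exp_pos _).le)
            (fun v _ _ h => by rw [hdep v h]) hread
      _ ≤ ∏ v ∈ V, Real.exp (c v * t ^ 2) := by
          refine prod_le_prod (fun _ _ => Real.sqrt_nonneg _) fun v _ => ?_
          rw [Real.sqrt_le_left (Real.exp_pos _).le, ← Real.exp_nat_mul]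
          convert (hX v).mgf_le (2 * t) using 2
          ring
      _ = Real.exp ((2 * ∑ v ∈ V, c v : ℝ≥0) * t ^ 2 / 2) := by
          rw [← Real.exp_sum, ← sum_mul]
          push_cast
          ring_nf

end ReadTwo

end MD

lemma ProbabilityTheory.HasSubgaussianMGF.measureReal_abs_ge_le {Ω : Type*} [MeasurableSpace Ω]
    {μ : Measure Ω} [IsFiniteMeasure μ] {X : Ω → ℝ} {c : NNReal} (h : HasSubgaussianMGF X c μ)
    {ε : ℝ} (hε : 0 ≤ ε) :
    μ.real {ω | ε ≤ |X ω|} ≤ 2 * Real.exp (-ε ^ 2 / (2 * c)) := by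
  have hsplit : {ω | ε ≤ |X ω|} = {ω | ε ≤ X ω} ∪ {ω | ε ≤ (-X) ω} := by
    ext ω
    simp [le_abs]
  rw [hsplit, two_mul]
  exact (measureReal_union_le _ _).trans (add_le_add (h.measure_ge_le hε) (h.neg.measure_ge_le hε))

namespace MD

variable {n : ℕ}

lemma isProbabilityMeasure_bern {p : ℝ} (hp0 : 0 ≤ p) (hp1 : p ≤ 1) :
    IsProbabilityMeasure (bern p) :=
  ⟨by simp [bern, ← ENNReal.ofReal_add hp0 (sub_nonneg.2 hp1)]⟩

def incidentEdges (v : Fin n) : Finset (Sym2 (Fin n)) := {e | v ∈ e}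

lemma card_filter_mem_incidentEdges_le_two (e : Sym2 (Fin n)) :
    #{v | e ∈ incidentEdges v} ≤ 2 := by
  induction e using Sym2.ind with
  | _ a b =>
    refine (card_le_card fun v hv => ?_).trans (card_le_two (a := a) (b := b))
    simpa [incidentEdges, or_comm] using hv

lemma dependsOn_bcolour_one (C1 : Finset (Fin n)) (v : Fin n) :
    DependsOn (fun ω => bcolour C1 ω 1 v) (incidentEdges v : Set (Sym2 (Fin n))) := by
  intro ω ω' h
  have hnbhd : nbhd ω v = nbhd ω' v :=
    filter_congr fun u _ => by rw [Adj, Adj, h s(v, u) (by simp [incidentEdges])]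
  simp [bcolour, hnbhd]

lemma bC1card_one_eq_sum (C1 : Finset (Fin n)) (ω : Sym2 (Fin n) → Bool) :
    (bC1card C1 ω 1 : ℝ) = ∑ v, if bcolour C1 ω 1 v then 1 else 0 := by
  simp only [bC1card, card_filter, Nat.cast_sum, Nat.cast_ite, Nat.cast_one, Nat.cast_zero]

theorem measureReal_le_abs_bC1card_one_sub_integral_le {p : ℝ} (hp0 : 0 ≤ p) (hp1 : p ≤ 1)
    (C1 : Finset (Fin n)) {ε : ℝ} (hε : 0 ≤ ε) :
    (gnp n p).real {ω | ε ≤ |(bC1card C1 ω 1 : ℝ) - ∫ ω', (bC1card C1 ω' 1 : ℝ) ∂(gnp n p)|} ≤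
      2 * Real.exp (-ε ^ 2 / n) := by
  have := isProbabilityMeasure_bern hp0 hp1
  have : IsProbabilityMeasure (gnp n p) := Measure.pi.instIsProbabilityMeasure _
  let I : Fin n → (Sym2 (Fin n) → Bool) → ℝ := fun v ω => if bcolour C1 ω 1 v then 1 else 0
  have hI : ∀ v, HasSubgaussianMGF (fun ω => I v ω - ∫ ω', I v ω' ∂(gnp n p))
      (1 / 4) (gnp n p) := fun v => by
    convert hasSubgaussianMGF_of_mem_Icc (X := I v) (μ := gnp n p) (a := 0) (b := 1)
      Measurable.of_discrete.aemeasurable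
      (ae_of_all _ fun ω => by by_cases h : bcolour C1 ω 1 v <;> simp [I, h]) using 1
    norm_num
  have hcentre : ∀ ω, ∑ v, (I v ω - ∫ ω', I v ω' ∂(gnp n p)) =
      (bC1card C1 ω 1 : ℝ) - ∫ ω', (bC1card C1 ω' 1 : ℝ) ∂(gnp n p) := fun ω => by
    rw [sum_sub_distrib, ← integral_finsetSum _ fun v _ => Integrable.of_finite]
    simp only [bC1card_one_eq_sum, I]
  have hsum : HasSubgaussianMGF
      (fun ω => (bC1card C1 ω 1 : ℝ) - ∫ ω', (bC1card C1 ω' 1 : ℝ) ∂(gnp n p))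
      (n / 2) (gnp n p) := by
    convert hasSubgaussianMGF_sum_of_read_two univ _ incidentEdges
      (fun v ω ω' h => by simp only [I, dependsOn_bcolour_one C1 v h])
      card_filter_mem_incidentEdges_le_two hI using 1
    · exact funext fun ω => (hcentre ω).symm
    · rw [sum_const, card_univ, Fintype.card_fin, nsmul_eq_mul]
      ring
    · rfl
  convert hsum.measureReal_abs_ge_le hε using 3
  push_cast
  ring

lemma one_le_log_one_div {p : ℝ} (hp0 : 0 < p) (hp : p ≤ 1 / 4) : 1 ≤ Real.log (1 / p) := by
  have h4 : 4 ≤ 1 / p := by rw [le_div_iff₀ hp0]; linarith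
  rw [Real.le_log_iff_exp_le (by positivity)]
  linarith [Real.exp_one_lt_d9]

lemma exists_two_mul_exp_neg_le {D D' : ℝ} (hD : 0 < D) (hD' : 0 < D') :
    ∃ C > (0 : ℝ), ∀ p Δ : ℝ, 0 < p → p ≤ 1 / 4 →
      1 / √p * Real.exp (C * √(Real.log (1 / p))) ≤ Δ →
      2 * Real.exp (-(D ^ 2 * p * Δ ^ 2)) ≤ D' * p * Δ := by
  -- for `L ≥ 1` and `C = √K / D` this gives `D² C² L = K L ≥ L / 2 + log (2 / D')`
  set K := 1 / 2 + |Real.log (2 / D')| with hK_def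
  have hK : 0 < K := by positivity
  refine ⟨√K / D, by positivity, fun p Δ hp0 hp hΔ => ?_⟩
  set L := Real.log (1 / p) with hL
  have hL1 : 1 ≤ L := one_le_log_one_div hp0 hp
  have hsp : 0 < √p := Real.sqrt_pos.2 hp0
  set u := √p * Δ with hu_def
  have hu : Real.exp (√K / D * √L) ≤ u := by rwa [one_div, inv_mul_le_iff₀ hsp] at hΔ
  have hu1 : 1 ≤ u := (Real.one_le_exp (by positivity)).trans hu
  have hCu : √K / D * √L ≤ u := by linarith [Real.add_one_le_exp (√K / D * √L)]
  have hlog : Real.log (2 / (D' * √p)) ≤ D ^ 2 * u ^ 2 :=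
    calc Real.log (2 / (D' * √p)) = Real.log (2 / D') + L / 2 := by
          rw [← div_div, Real.log_div (by positivity) hsp.ne', Real.log_sqrt hp0.le, hL, one_div,
            Real.log_inv]
          ring
      _ ≤ K * L := by
          have := mul_le_mul_of_nonneg_left hL1 (abs_nonneg (Real.log (2 / D')))
          rw [hK_def, add_mul]
          linarith [le_abs_self (Real.log (2 / D'))]
      _ = D ^ 2 * (√K / D * √L) ^ 2 := by
          rw [mul_pow, div_pow, Real.sq_sqrt hK.le, Real.sq_sqrt (by linarith)]
          field_simp
      _ ≤ D ^ 2 * u ^ 2 := by gcongr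
  calc 2 * Real.exp (-(D ^ 2 * p * Δ ^ 2)) = 2 / Real.exp (D ^ 2 * u ^ 2) := by
        rw [hu_def, mul_pow, Real.sq_sqrt hp0.le, Real.exp_neg, div_eq_mul_inv, mul_assoc]
    _ ≤ D' * √p := by
        rw [div_le_iff₀ (Real.exp_pos _), ← div_le_iff₀' (by positivity),
          ← Real.log_le_iff_le_exp (by positivity)]
        exact hlog
    _ ≤ D' * √p * u := le_mul_of_one_le_right (by positivity) hu1
    _ = D' * p * Δ := by rw [hu_def, ← mul_assoc, mul_assoc D', Real.mul_self_sqrt hp0.le]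

/-- Consider biased majority dynamics on `G(n,p)` with an arbitrary
initial partition, and `Δ = ||C_{1,0}| - |C_{2,0}||/2`.  For all constants `D, 𝒟 > 0`
there is a constant `Ĉ > 0` such that for all sufficiently large `n`, if
`(log n)/n ≤ p ≤ 1/4`, `Δ ≤ 10/p` and `Δ ≥ (1/√p)·exp(Ĉ·√(log(1/p)))`, then
`P(| |C_{1,1}| - E[|C_{1,1}|] | ≥ D·√(pn)·Δ) ≤ 1/√(np(1-p)) + 𝒟·p·Δ`. -/
theorem statement_6 (D D' : ℝ) (hD : 0 < D) (hD' : 0 < D') :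
    ∃ C > (0:ℝ), ∃ N : ℕ, ∀ (n : ℕ), N ≤ n →
      ∀ (p Δ : ℝ) (C1 : Finset (Fin n)),
        Δ = |(C1.card : ℝ) - (C1ᶜ.card : ℝ)| / 2 →
        Real.log n / n ≤ p → p ≤ 1/4 → Δ ≤ 10 / p →
        (1 / Real.sqrt p) * Real.exp (C * Real.sqrt (Real.log (1 / p))) ≤ Δ →
        (gnp n p {ω | D * Real.sqrt (p * n) * Δ ≤
            |(bC1card C1 ω 1 : ℝ) -
              ∫ ω', (bC1card C1 ω' 1 : ℝ) ∂(gnp n p)|}).toReal ≤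
          1 / Real.sqrt (n * p * (1 - p)) + D' * p * Δ := by
  obtain ⟨C, hC, htail⟩ := exists_two_mul_exp_neg_le hD hD'
  refine ⟨C, hC, 2, fun n hn p Δ C1 _ hlog hp _ hΔ => ?_⟩
  have hn : (1 : ℝ) < n := by exact_mod_cast hn
  have hp0 : 0 < p := (div_pos (Real.log_pos hn) (by linarith)).trans_le hlog
  have hΔ0 : 0 ≤ Δ := le_trans (by positivity) hΔ
  calc (gnp n p).real _
      ≤ 2 * Real.exp (-(D * √(p * n) * Δ) ^ 2 / n) :=
        measureReal_le_abs_bC1card_one_sub_integral_le hp0.le (by linarith) C1 (by positivity)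
    _ = 2 * Real.exp (-(D ^ 2 * p * Δ ^ 2)) := by
        rw [mul_pow, mul_pow, Real.sq_sqrt (by positivity)]
        field_simp
    _ ≤ D' * p * Δ := htail p Δ hp0 hp hΔ
    _ ≤ _ := le_add_of_nonneg_left (by positivity)

end MD
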